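/- With Δ as above and Δ(Σ,σ²) the same construction at parameters (Σ,σ²), the matrix M(Σ,σ²) = Δ(Σ,σ²)⁻¹ Δ₀ equals [[(Σ⁻¹Σ₀)⊗Iₙ, ((Σ⁻¹Σ₀⊗Iₙ) − (σ₀²/σ²) I_{nm}) Cᵀ],[0, (σ₀²/σ²) Iₙ]]. In particular M(Σ,σ²) = I_{n(m+1)} if and only if Σ = Σ₀ and σ² = σ₀². -/

import Mathlib

/-!
With `L = [[I, 0], [C, I]]` and `U = Lᵀ`, both independent of the parameters,
`Δ(Σ, σ²) = L · diag(Σ ⊗ Iₙ, σ² Iₙ) · U`. Hence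
`Δ(Σ, σ²)⁻¹ Δ₀ = U⁻¹ · diag((Σ⁻¹Σ₀) ⊗ Iₙ, (σ₀²/σ²) Iₙ) · U`, and conjugating a
block-diagonal matrix by the unitriangular `U` gives the stated block form. Its diagonal
blocks are the identity exactly when `Σ = Σ₀` and `σ² = σ₀²`, and then the off-diagonal
block vanishes.
-/

open Matrix
open scoped Kronecker

/-- The model error variance matrix at parameters `(Σ, σ²)`:
`Δ(Σ,σ²) = [[Σ⊗Iₙ, (Σ⊗Iₙ)Cᵀ],[C(Σ⊗Iₙ), C(Σ⊗Iₙ)Cᵀ + σ²Iₙ]]`. -/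
noncomputable def Delta {m n : ℕ} (C : Matrix (Fin n) (Fin m × Fin n) ℝ)
    (Sig : Matrix (Fin m) (Fin m) ℝ) (σsq : ℝ) :
    Matrix (Fin m × Fin n ⊕ Fin n) (Fin m × Fin n ⊕ Fin n) ℝ :=
  fromBlocks
    (Sig ⊗ₖ (1 : Matrix (Fin n) (Fin n) ℝ))
    ((Sig ⊗ₖ (1 : Matrix (Fin n) (Fin n) ℝ)) * Cᵀ)
    (C * (Sig ⊗ₖ (1 : Matrix (Fin n) (Fin n) ℝ)))
    (C * (Sig ⊗ₖ (1 : Matrix (Fin n) (Fin n) ℝ)) * Cᵀ + σsq • 1)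

namespace Matrix

variable {R : Type*} [CommRing R] {m n : Type*} [DecidableEq m] [DecidableEq n]

theorem fromBlocks_zero₂₁_eq_one_iff (P : Matrix m m R) (X : Matrix m n R) (Q : Matrix n n R) :
    fromBlocks P X 0 Q = 1 ↔ P = 1 ∧ X = 0 ∧ Q = 1 := by
  rw [← fromBlocks_one, fromBlocks_inj]
  simp

theorem kronecker_one_eq_one_iff [Nonempty n] {A : Matrix m m R} :
    A ⊗ₖ (1 : Matrix n n R) = 1 ↔ A = 1 := by
  refine ⟨fun h => ?_, fun h => by rw [h, one_kronecker_one]⟩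
  obtain ⟨k⟩ := ‹Nonempty n›
  ext i j
  simpa [one_apply] using congrFun₂ h (i, k) (j, k)

theorem smul_one_eq_one_iff [Nonempty n] {q : R} : (q • 1 : Matrix n n R) = 1 ↔ q = 1 := by
  refine ⟨fun h => ?_, fun h => by rw [h, one_smul]⟩
  obtain ⟨k⟩ := ‹Nonempty n›
  simpa using congrFun₂ h k k

variable [Fintype m] [Fintype n]

-- `ldu` in a name refers to `fromBlocks A (A * B) (C * A) (C * A * B + S)`, factored below.
theorem fromBlocks_eq_lower_mul_diagonal_mul_upper (A : Matrix m m R) (B : Matrix m n R)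
    (C : Matrix n m R) (S : Matrix n n R) :
    fromBlocks A (A * B) (C * A) (C * A * B + S) =
      fromBlocks 1 0 C 1 * fromBlocks A 0 0 S * fromBlocks 1 B 0 1 := by
  simp [fromBlocks_multiply, Matrix.mul_assoc]

theorem fromBlocks_upper_neg_mul_diagonal_mul_upper (B : Matrix m n R) (P : Matrix m m R)
    (Q : Matrix n n R) :
    fromBlocks 1 (-B) 0 1 * fromBlocks P 0 0 Q * fromBlocks 1 B 0 1 =
      fromBlocks P (P * B - B * Q) 0 Q := by
  simp [fromBlocks_multiply, sub_eq_add_neg]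

theorem fromBlocks_upper_mul_upper_neg (B : Matrix m n R) :
    fromBlocks 1 B 0 1 * fromBlocks 1 (-B) 0 1 = (1 : Matrix (m ⊕ n) (m ⊕ n) R) := by
  simp [fromBlocks_multiply]

theorem isUnit_det_fromBlocks_ldu {A : Matrix m m R} {S : Matrix n n R}
    (hA : IsUnit A.det) (hS : IsUnit S.det) (B : Matrix m n R) (C : Matrix n m R) :
    IsUnit (fromBlocks A (A * B) (C * A) (C * A * B + S)).det := by
  rw [fromBlocks_eq_lower_mul_diagonal_mul_upper, det_mul, det_mul, det_fromBlocks_zero₁₂,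
    det_fromBlocks_zero₁₂, det_fromBlocks_zero₂₁]
  simpa using hA.mul hS

theorem inv_fromBlocks_ldu_mul_fromBlocks_ldu {A : Matrix m m R} {S : Matrix n n R}
    (hA : IsUnit A.det) (hS : IsUnit S.det) (A₀ : Matrix m m R) (S₀ : Matrix n n R)
    (B : Matrix m n R) (C : Matrix n m R) :
    (fromBlocks A (A * B) (C * A) (C * A * B + S))⁻¹ *
        fromBlocks A₀ (A₀ * B) (C * A₀) (C * A₀ * B + S₀) =
      fromBlocks (A⁻¹ * A₀) (A⁻¹ * A₀ * B - B * (S⁻¹ * S₀)) 0 (S⁻¹ * S₀) := by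
  have hD : fromBlocks A 0 0 S * fromBlocks (A⁻¹ * A₀) 0 0 (S⁻¹ * S₀) =
      fromBlocks A₀ 0 0 S₀ := by
    simp [fromBlocks_multiply, ← Matrix.mul_assoc, mul_nonsing_inv _ hA, mul_nonsing_inv _ hS]
  have hΔ₀ : fromBlocks A₀ (A₀ * B) (C * A₀) (C * A₀ * B + S₀) =
      fromBlocks A (A * B) (C * A) (C * A * B + S) *
        (fromBlocks 1 (-B) 0 1 * fromBlocks (A⁻¹ * A₀) 0 0 (S⁻¹ * S₀) * fromBlocks 1 B 0 1) := by
    rw [fromBlocks_eq_lower_mul_diagonal_mul_upper A,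
      fromBlocks_eq_lower_mul_diagonal_mul_upper A₀, ← hD]
    simp only [Matrix.mul_assoc]
    rw [← Matrix.mul_assoc (fromBlocks 1 B 0 1), fromBlocks_upper_mul_upper_neg, Matrix.one_mul]
  rw [hΔ₀, nonsing_inv_mul_cancel_left _ _ (isUnit_det_fromBlocks_ldu hA hS B C),
    fromBlocks_upper_neg_mul_diagonal_mul_upper]

theorem nonsing_inv_mul_eq_one_iff {A B : Matrix n n R} (hA : IsUnit A.det) :
    A⁻¹ * B = 1 ↔ A = B := by
  refine ⟨fun h => ?_, fun h => h ▸ nonsing_inv_mul A hA⟩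
  rw [← mul_nonsing_inv_cancel_left A B hA, h, Matrix.mul_one]

end Matrix

theorem inv_Delta_mul_Delta {m n : ℕ} (C : Matrix (Fin n) (Fin m × Fin n) ℝ)
    {Sig : Matrix (Fin m) (Fin m) ℝ} (hSig : IsUnit Sig.det) (Sig0 : Matrix (Fin m) (Fin m) ℝ)
    {σsq : ℝ} (hσ : σsq ≠ 0) (σ0sq : ℝ) :
    (Delta C Sig σsq)⁻¹ * Delta C Sig0 σ0sq =
      fromBlocks ((Sig⁻¹ * Sig0) ⊗ₖ (1 : Matrix (Fin n) (Fin n) ℝ))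
        ((((Sig⁻¹ * Sig0) ⊗ₖ (1 : Matrix (Fin n) (Fin n) ℝ)) - (σ0sq / σsq) • 1) * Cᵀ)
        0 ((σ0sq / σsq) • 1) := by
  have hA : IsUnit (Sig ⊗ₖ (1 : Matrix (Fin n) (Fin n) ℝ)).det := by
    simpa [det_kronecker] using hSig.pow _
  have hS : IsUnit (σsq • 1 : Matrix (Fin n) (Fin n) ℝ).det := by
    simpa using hσ.isUnit.pow _
  have hAinv :
      (Sig ⊗ₖ (1 : Matrix (Fin n) (Fin n) ℝ))⁻¹ * (Sig0 ⊗ₖ 1) = (Sig⁻¹ * Sig0) ⊗ₖ 1 := by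
    rw [inv_kronecker, inv_one, ← mul_kronecker_mul, Matrix.one_mul]
  have hSinv : (σsq • 1 : Matrix (Fin n) (Fin n) ℝ)⁻¹ * (σ0sq • 1) = (σ0sq / σsq) • 1 := by
    rw [inv_eq_left_inv (B := σsq⁻¹ • 1) (by rw [smul_mul_smul_comm, inv_mul_cancel₀ hσ,
      Matrix.one_mul, one_smul]), smul_mul_smul_comm, Matrix.one_mul, inv_mul_eq_div]
  rw [Delta, Delta, inv_fromBlocks_ldu_mul_fromBlocks_ldu hA hS, hAinv, hSinv,
    Matrix.sub_mul, Matrix.mul_smul, Matrix.smul_mul, Matrix.mul_one, Matrix.one_mul]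

theorem variance_identification_general {m n : ℕ} (hn : 0 < n)
    (Sig0 Sig : Matrix (Fin m) (Fin m) ℝ) (hSig : Sig.PosDef)
    (C : Matrix (Fin n) (Fin m × Fin n) ℝ)
    (σ0sq σsq : ℝ) (hσ : 0 < σsq) :
    (Delta C Sig σsq)⁻¹ * Delta C Sig0 σ0sq =
        fromBlocks
          ((Sig⁻¹ * Sig0) ⊗ₖ (1 : Matrix (Fin n) (Fin n) ℝ))
          ((((Sig⁻¹ * Sig0) ⊗ₖ (1 : Matrix (Fin n) (Fin n) ℝ)) -
              (σ0sq / σsq) • 1) * Cᵀ)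
          0 ((σ0sq / σsq) • 1) ∧
      ((Delta C Sig σsq)⁻¹ * Delta C Sig0 σ0sq = 1 ↔ Sig = Sig0 ∧ σsq = σ0sq) := by
  have hdet : IsUnit Sig.det := hSig.det_pos.ne'.isUnit
  have hM := inv_Delta_mul_Delta C hdet Sig0 hσ.ne' σ0sq
  refine ⟨hM, ?_⟩
  have : Nonempty (Fin n) := ⟨⟨0, hn⟩⟩
  rw [hM, fromBlocks_zero₂₁_eq_one_iff, kronecker_one_eq_one_iff, smul_one_eq_one_iff,
    nonsing_inv_mul_eq_one_iff hdet, div_eq_one_iff_eq hσ.ne']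
  constructor
  · rintro ⟨rfl, -, rfl⟩
    exact ⟨rfl, rfl⟩
  · rintro ⟨rfl, rfl⟩
    simp [nonsing_inv_mul _ hdet, div_self hσ.ne']

/-- `M(Σ,σ²) = Δ(Σ,σ²)⁻¹ Δ₀` has the block upper-triangular form
`[[(Σ⁻¹Σ₀)⊗Iₙ, ((Σ⁻¹Σ₀⊗Iₙ) − (σ₀²/σ²)I)Cᵀ],[0, (σ₀²/σ²)Iₙ]]`, and it equals the
identity iff `Σ = Σ₀` and `σ² = σ₀²`: identification of the variance parameters. -/
theorem variance_identification {m n : ℕ} (hn : 0 < n)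
    (Sig0 Sig : Matrix (Fin m) (Fin m) ℝ) (hSig0 : Sig0.PosDef) (hSig : Sig.PosDef)
    (C : Matrix (Fin n) (Fin m × Fin n) ℝ)
    (σ0sq σsq : ℝ) (hσ0 : 0 < σ0sq) (hσ : 0 < σsq) :
    (Delta C Sig σsq)⁻¹ * Delta C Sig0 σ0sq =
        fromBlocks
          ((Sig⁻¹ * Sig0) ⊗ₖ (1 : Matrix (Fin n) (Fin n) ℝ))
          ((((Sig⁻¹ * Sig0) ⊗ₖ (1 : Matrix (Fin n) (Fin n) ℝ)) -
              (σ0sq / σsq) • 1) * Cᵀ)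
          0 ((σ0sq / σsq) • 1) ∧
      ((Delta C Sig σsq)⁻¹ * Delta C Sig0 σ0sq = 1 ↔ Sig = Sig0 ∧ σsq = σ0sq) :=
  variance_identification_general hn Sig0 Sig hSig C σ0sq σsq hσ
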